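/- Let n be odd with n ≥ 7, let α = (3, 4, ..., n) and β = (4, 6) be permutations of {1, ..., n}, and set τ = βαβ⁻¹αβ⁻¹α⁻¹βα⁻¹. Then the three permutations (βα⁻¹)², τ, and (αβ⁻¹)⁻¹τ(αβ⁻¹) generate the alternating group on {3, ..., n}. -/

import Mathlib

/-!
With `β = (4 6)` and `h = α⁻¹β`, the generator `τ` is the 3-cycle `(4 6 n) = (4 n)(4 6)`, its
conjugate is `(5 7 3)`, and `h` is `(4 5)` times the `(n - 4)`-cycle `(3 n n-1 ⋯ 7 6)`. As `n - 4`
is odd, `h²` fixes `4` and is still a single cycle on `M = {3, 6, 7, …, n}`. Conjugating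
`(4 n)(4 6)` by powers of `h²` and multiplying telescopically puts every `(4 x)(4 y)` with
`x, y ∈ M` into the group, and conjugating `(5 7 3)` by `(4 3)(4 7)` adds `(4 3)(4 5)`. Products
`(p x)(p y)` through a fixed pivot `p` give every 3-cycle on a set, and 3-cycles generate its
alternating group.
-/

open Fin.NatCast

open Equiv Equiv.Perm Subgroup

section SwapPairs

variable {α : Type*} [DecidableEq α]

theorem swap_mul_swap_eq_swap_mul_swap {p x y : α} (hyp : y ≠ p) (hyx : y ≠ x) :
    swap p x * swap x y = swap p y * swap p x := by
  rw [← swap_mul_swap_mul_swap hyp hyx, ← mul_assoc, ← mul_assoc, swap_mul_self, one_mul,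
    swap_comm y p]

theorem eq_swap_of_apply {β : Perm α} {a b : α} (ha : β a = b) (hb : β b = a)
    (h : ∀ x, x ≠ a → x ≠ b → β x = x) : β = swap a b := by
  ext x
  rcases eq_or_ne x a with rfl | hxa
  · simp [ha]
  rcases eq_or_ne x b with rfl | hxb
  · simp [hb]
  · rw [h x hxa hxb, swap_apply_of_ne_of_ne hxa hxb]

theorem conj_swap_mul_swap (c : Perm α) (a b d : α) :
    c * (swap a b * swap a d) * c⁻¹ = swap (c a) (c b) * swap (c a) (c d) := by
  rw [swap_apply_apply, swap_apply_apply]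
  group

variable {H : Subgroup (Perm α)} {p x y z : α}

theorem swap_mul_swap_mem_trans (hxy : swap p x * swap p y ∈ H)
    (hyz : swap p y * swap p z ∈ H) : swap p x * swap p z ∈ H := by
  simpa [mul_assoc] using H.mul_mem hxy hyz

theorem swap_mul_swap_mem_symm (h : swap p x * swap p y ∈ H) : swap p y * swap p x ∈ H := by
  simpa using H.inv_mem h

theorem swap_mul_swap_mem_of_sameCycle [Finite α] {c : Perm α} (hc : c ∈ H) (hcp : c p = p)
    (hx : swap p x * swap p (c x) ∈ H) (hxy : c.SameCycle x y) : swap p x * swap p y ∈ H := by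
  obtain ⟨k, rfl⟩ := hxy.exists_nat_pow_eq
  clear hxy
  induction k with
  | zero => simp [H.one_mem]
  | succ k ih =>
    have hconj := H.mul_mem (H.mul_mem (H.pow_mem hc k) hx) (H.inv_mem (H.pow_mem hc k))
    rw [conj_swap_mul_swap, pow_apply_eq_self_of_apply_eq_self hcp, ← mul_apply, ← pow_succ]
      at hconj
    exact swap_mul_swap_mem_trans ih hconj

theorem swap_mul_swap_mem_of_pivot {s : Set α}
    (hs : ∀ x ∈ s, ∀ y ∈ s, x ≠ p → y ≠ p → swap p x * swap p y ∈ H) {a b c : α}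
    (ha : a ∈ s) (hb : b ∈ s) (hc : c ∈ s) (hab : a ≠ b) (hbc : b ≠ c) (hbp : b ≠ p)
    (hcp : c ≠ p) : swap a b * swap b c ∈ H := by
  rcases eq_or_ne a p with rfl | hap
  · rw [swap_mul_swap_eq_swap_mul_swap hcp hbc.symm]
    exact hs c hc b hb hcp hbp
  · rw [← swap_mul_swap_mul_swap hbp hab.symm, swap_comm b c, ← swap_mul_swap_mul_swap hbp hbc,
      swap_comm b p]
    simpa [mul_assoc] using
      H.mul_mem (H.mul_mem (hs a ha b hb hap hbp) (hs a ha c hc hap hcp)) (hs b hb c hc hbp hcp)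

theorem Equiv.Perm.IsThreeCycle.ne_apply_of_mem_support [Fintype α] {g : Perm α}
    (hg : g.IsThreeCycle) {a : α} (ha : a ∈ g.support) : a ≠ g a ∧ a ≠ g (g a) ∧ g a ≠ g (g a) := by
  simpa [and_assoc] using hg.nodup_iff_mem_support.2 ha

theorem map_ofSubtype_alternatingGroup_le {s : Finset α} (hp : p ∈ s)
    (hs : ∀ x ∈ s, ∀ y ∈ s, x ≠ p → y ≠ p → swap p x * swap p y ∈ H) :
    (alternatingGroup s).map ofSubtype ≤ H := by
  rw [← closure_three_cycles_eq_alternating, MonoidHom.map_closure, closure_le]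
  rintro _ ⟨g, hg, rfl⟩
  obtain ⟨a, ha, hgap, hggap⟩ : ∃ a ∈ g.support, g a ≠ ⟨p, hp⟩ ∧ g (g a) ≠ ⟨p, hp⟩ := by
    by_cases hpg : ⟨p, hp⟩ ∈ g.support
    · obtain ⟨hp₁, hp₂, -⟩ := hg.ne_apply_of_mem_support hpg
      exact ⟨_, hpg, hp₁.symm, hp₂.symm⟩
    · obtain ⟨a, ha⟩ := Finset.card_pos.1 (hg.card_support ▸ three_pos)
      exact ⟨a, ha, ne_of_mem_of_not_mem (apply_mem_support.2 ha) hpg,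
        ne_of_mem_of_not_mem (apply_mem_support.2 (apply_mem_support.2 ha)) hpg⟩
  obtain ⟨ha₁, -, ha₃⟩ := hg.ne_apply_of_mem_support ha
  rw [hg.eq_swap_mul_swap_iff_mem_support.2 ha, SetLike.mem_coe, map_mul, ofSubtype_swap_eq,
    ofSubtype_swap_eq]
  exact swap_mul_swap_mem_of_pivot (s := s) hs a.2 (g a).2 (g (g a)).2
    (Subtype.coe_ne_coe.2 ha₁) (Subtype.coe_ne_coe.2 ha₃) (Subtype.coe_ne_coe.2 hgap)
    (Subtype.coe_ne_coe.2 hggap)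

variable [Fintype α]

theorem mem_map_ofSubtype_alternatingGroup_iff {s : Finset α} {σ : Perm α} :
    σ ∈ (alternatingGroup s).map ofSubtype ↔ sign σ = 1 ∧ ∀ x ∉ s, σ x = x := by
  rw [alternatingGroup.map_ofSubtype, mem_inf, mem_range_ofSubtype_iff, mem_alternatingGroup,
    and_comm]
  refine and_congr_right fun _ => ⟨fun h x hx => ?_, fun h x hx => ?_⟩
  · by_contra hσx
    exact hx (h (mem_support.2 hσx))
  · by_contra hxs
    exact mem_support.1 hx (h x hxs)

theorem swap_mul_swap_mem_map_ofSubtype_alternatingGroup {s : Finset α} {a b c d : α}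
    (ha : a ∈ s) (hb : b ∈ s) (hc : c ∈ s) (hd : d ∈ s) (hab : a ≠ b) (hcd : c ≠ d) :
    swap a b * swap c d ∈ (alternatingGroup s).map ofSubtype := by
  refine mem_map_ofSubtype_alternatingGroup_iff.2 ⟨by simp [sign_swap hab, sign_swap hcd],
    fun x hx => ?_⟩
  rw [mul_apply, swap_apply_of_ne_of_ne (ne_of_mem_of_not_mem hc hx).symm
    (ne_of_mem_of_not_mem hd hx).symm, swap_apply_of_ne_of_ne (ne_of_mem_of_not_mem ha hx).symm
    (ne_of_mem_of_not_mem hb hx).symm]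

theorem sq_mem_map_ofSubtype_alternatingGroup {s : Finset α} {g : Perm α}
    (hg : ∀ x ∉ s, g x = x) : g ^ 2 ∈ (alternatingGroup s).map ofSubtype :=
  mem_map_ofSubtype_alternatingGroup_iff.2
    ⟨by rw [map_pow, Int.units_sq], fun x hx => by rw [sq, mul_apply, hg x hx, hg x hx]⟩

end SwapPairs

theorem sameCycle_apply_sub_two_mul {X : Type*} {c : Perm X} {e : ℕ → X} {a b : ℕ}
    (hc : ∀ i, a ≤ i → i + 2 ≤ b → c (e (i + 2)) = e i) :
    ∀ m, a + 2 * m ≤ b → c.SameCycle (e b) (e (b - 2 * m))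
  | 0, _ => SameCycle.refl c (e b)
  | m + 1, hm => by
    have hstep := hc (b - 2 * (m + 1)) (by omega) (by omega)
    rw [show b - 2 * (m + 1) + 2 = b - 2 * m by omega] at hstep
    rw [← hstep]
    exact sameCycle_apply_right.2 (sameCycle_apply_sub_two_mul hc m (by omega))

section Generators

variable {n : ℕ}

theorem natCast_ne_natCast {i j : ℕ} (h : i ≤ n ∧ j ≤ n ∧ i ≠ j) : (i : Fin (n + 1)) ≠ j := by
  simp (disch := omega) [Fin.ext_iff, Nat.mod_eq_of_lt, h.2.2]

-- The orbit of `6` is `6, n, n - 2, …, 7, 3, n - 1, n - 3, …, 8`, which exhausts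
-- `{3} ∪ [6, n]` because `n` is odd.
theorem sameCycle_six {c : Perm (Fin (n + 1))} (hn : 7 ≤ n) (hodd : Odd n)
    (h6 : c (6 : ℕ) = n) (h7 : c (7 : ℕ) = (3 : ℕ)) (h3 : c (3 : ℕ) = (n - 1 : ℕ))
    (hstep : ∀ i : ℕ, 6 ≤ i → i + 2 ≤ n → c (i + 2 : ℕ) = i)
    {y : Fin (n + 1)} (hy : y.val = 3 ∨ 6 ≤ y.val) : c.SameCycle (6 : ℕ) y := by
  obtain ⟨l, hl⟩ := hodd
  have descend (b m : ℕ) (hb : b ≤ n) (hm : 6 + 2 * m ≤ b) :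
      c.SameCycle (b : ℕ) (b - 2 * m : ℕ) :=
    sameCycle_apply_sub_two_mul (e := Nat.cast) (fun i hi hib => hstep i hi (by omega)) m hm
  have h6n : c.SameCycle (6 : ℕ) n := h6 ▸ sameCycle_apply_right.2 SameCycle.rfl
  have h67 : c.SameCycle (6 : ℕ) (7 : ℕ) := by
    simpa [show n - 2 * (l - 3) = 7 by omega] using
      h6n.trans (descend n (l - 3) le_rfl (by omega))
  have h63 : c.SameCycle (6 : ℕ) (3 : ℕ) :=
    h67.trans (h7 ▸ sameCycle_apply_right.2 SameCycle.rfl)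
  have hyn := y.is_le
  rw [← Fin.cast_val_eq_self y]
  rcases hy with hy | hy
  · rwa [hy]
  rcases Nat.even_or_odd y.val with ⟨m, hm⟩ | ⟨m, hm⟩
  · have h6n1 : c.SameCycle (6 : ℕ) (n - 1 : ℕ) :=
      h63.trans (h3 ▸ sameCycle_apply_right.2 SameCycle.rfl)
    simpa [show n - 1 - 2 * ((n - 1 - y.val) / 2) = y.val by omega] using
      h6n1.trans (descend (n - 1) ((n - 1 - y.val) / 2) (by omega) (by omega))
  · simpa [show n - 2 * ((n - y.val) / 2) = y.val by omega] using
      h6n.trans (descend n ((n - y.val) / 2) le_rfl (by omega))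

variable {α : Perm (Fin (n + 1))}

theorem inv_apply_natCast
    (hα₁ : ∀ i : ℕ, 3 ≤ i → i < n → α (i : Fin (n + 1)) = ((i + 1 : ℕ) : Fin (n + 1)))
    {i : ℕ} (h4 : 4 ≤ i) (hi : i ≤ n) : α⁻¹ (i : Fin (n + 1)) = ((i - 1 : ℕ) : Fin (n + 1)) := by
  rw [inv_eq_iff_eq, hα₁ (i - 1) (by omega) (by omega), Nat.sub_add_cancel (by omega)]

theorem swap_four_six_apply (hn : 6 ≤ n) {i : ℕ} (hi : i ≤ n) (h4 : i ≠ 4) (h6 : i ≠ 6) :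
    swap ((4 : ℕ) : Fin (n + 1)) (6 : ℕ) i = i :=
  swap_apply_of_ne_of_ne (natCast_ne_natCast (by omega)) (natCast_ne_natCast (by omega))

theorem sq_inv_mul_swap_apply_four (hn : 7 ≤ n)
    (hα₁ : ∀ i : ℕ, 3 ≤ i → i < n → α (i : Fin (n + 1)) = ((i + 1 : ℕ) : Fin (n + 1))) :
    ((α⁻¹ * swap ((4 : ℕ) : Fin (n + 1)) (6 : ℕ)) ^ 2) (4 : ℕ) = (4 : ℕ) := by
  have h4 : (α⁻¹ * swap ((4 : ℕ) : Fin (n + 1)) (6 : ℕ)) (4 : ℕ) = (5 : ℕ) := by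
    rw [mul_apply, swap_apply_left, inv_apply_natCast hα₁ (by omega) (by omega)]
  have h5 : (α⁻¹ * swap ((4 : ℕ) : Fin (n + 1)) (6 : ℕ)) (5 : ℕ) = (4 : ℕ) := by
    rw [mul_apply, swap_four_six_apply (by omega) (by omega) (by omega) (by omega),
      inv_apply_natCast hα₁ (by omega) (by omega)]
  rw [sq, mul_apply, h4, h5]

theorem sq_inv_mul_swap_mem_map_ofSubtype_alternatingGroup (hn : 6 ≤ n)
    (hα₃ : ∀ x : Fin (n + 1), x.val < 3 → α x = x) :
    (α⁻¹ * swap ((4 : ℕ) : Fin (n + 1)) (6 : ℕ)) ^ 2 ∈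
      (alternatingGroup (Finset.univ.filter fun x : Fin (n + 1) => 3 ≤ x.val)).map ofSubtype := by
  refine sq_mem_map_ofSubtype_alternatingGroup fun x hx => ?_
  have hx3 : x.val < 3 := by simpa using hx
  have hβx := swap_four_six_apply (n := n) (i := x.val) hn x.is_le (by omega) (by omega)
  rw [Fin.cast_val_eq_self] at hβx
  rw [mul_apply, hβx, inv_eq_iff_eq, hα₃ x hx3]

theorem sq_inv_mul_swap_apply_six (hn : 7 ≤ n)
    (hα₁ : ∀ i : ℕ, 3 ≤ i → i < n → α (i : Fin (n + 1)) = ((i + 1 : ℕ) : Fin (n + 1)))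
    (hα₂ : α (n : Fin (n + 1)) = (3 : ℕ)) :
    ((α⁻¹ * swap ((4 : ℕ) : Fin (n + 1)) (6 : ℕ)) ^ 2) (6 : ℕ) = n := by
  have h6 : (α⁻¹ * swap ((4 : ℕ) : Fin (n + 1)) (6 : ℕ)) (6 : ℕ) = (3 : ℕ) := by
    rw [mul_apply, swap_apply_right, inv_apply_natCast hα₁ (by omega) (by omega)]
  have h3 : (α⁻¹ * swap ((4 : ℕ) : Fin (n + 1)) (6 : ℕ)) (3 : ℕ) = n := by
    rw [mul_apply, swap_four_six_apply (by omega) (by omega) (by omega) (by omega), inv_eq_iff_eq,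
      hα₂]
  rw [sq, mul_apply, h6, h3]

theorem sameCycle_sq_inv_mul_swap (hn : 7 ≤ n) (hodd : Odd n)
    (hα₁ : ∀ i : ℕ, 3 ≤ i → i < n → α (i : Fin (n + 1)) = ((i + 1 : ℕ) : Fin (n + 1)))
    (hα₂ : α (n : Fin (n + 1)) = (3 : ℕ)) {y : Fin (n + 1)} (hy : y.val = 3 ∨ 6 ≤ y.val) :
    ((α⁻¹ * swap ((4 : ℕ) : Fin (n + 1)) (6 : ℕ)) ^ 2).SameCycle (6 : ℕ) y := by
  set h := α⁻¹ * swap ((4 : ℕ) : Fin (n + 1)) (6 : ℕ)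
  have hstep (i : ℕ) (h7 : 7 ≤ i) (hi : i ≤ n) : h i = (i - 1 : ℕ) := by
    rw [mul_apply, swap_four_six_apply (by omega) hi (by omega) (by omega),
      inv_apply_natCast hα₁ (by omega) hi]
  have h3 : h (3 : ℕ) = n := by
    rw [mul_apply, swap_four_six_apply (by omega) (by omega) (by omega) (by omega), inv_eq_iff_eq,
      hα₂]
  have h6 : h (6 : ℕ) = (3 : ℕ) := by
    rw [mul_apply, swap_apply_right, inv_apply_natCast hα₁ (by omega) (by omega)]
  refine sameCycle_six hn hodd (sq_inv_mul_swap_apply_six hn hα₁ hα₂) ?_ ?_ ?_ hy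
  · rw [sq, mul_apply, hstep 7 le_rfl (by omega), h6]
  · rw [sq, mul_apply, h3, hstep n hn le_rfl]
  · intro i hi hin
    rw [sq, mul_apply, hstep (i + 2) (by omega) hin, hstep (i + 2 - 1) (by omega) (by omega),
      show i + 2 - 1 - 1 = i by omega]

theorem tau_eq_swap_mul_swap (hn : 7 ≤ n)
    (hα₁ : ∀ i : ℕ, 3 ≤ i → i < n → α (i : Fin (n + 1)) = ((i + 1 : ℕ) : Fin (n + 1)))
    (hα₂ : α (n : Fin (n + 1)) = (3 : ℕ)) :
    α⁻¹ * swap ((4 : ℕ) : Fin (n + 1)) (6 : ℕ) * α⁻¹ *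
        (swap ((4 : ℕ) : Fin (n + 1)) (6 : ℕ))⁻¹ * α * (swap ((4 : ℕ) : Fin (n + 1)) (6 : ℕ))⁻¹ *
        α * swap ((4 : ℕ) : Fin (n + 1)) (6 : ℕ) =
      swap ((4 : ℕ) : Fin (n + 1)) n * swap ((4 : ℕ) : Fin (n + 1)) (6 : ℕ) := by
  set β := swap ((4 : ℕ) : Fin (n + 1)) (6 : ℕ)
  have hinv3 : α⁻¹ (3 : ℕ) = n := by rw [inv_eq_iff_eq, hα₂]
  have hinv4 : α⁻¹ (4 : ℕ) = (3 : ℕ) := inv_apply_natCast hα₁ (by omega) (by omega)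
  have hinv5 : α⁻¹ (5 : ℕ) = (4 : ℕ) := inv_apply_natCast hα₁ (by omega) (by omega)
  have hinv6 : α⁻¹ (6 : ℕ) = (5 : ℕ) := inv_apply_natCast hα₁ (by omega) (by omega)
  have hconj₁ : α⁻¹ * β * α = swap ((3 : ℕ) : Fin (n + 1)) (5 : ℕ) := by
    have := swap_apply_apply α⁻¹ ((4 : ℕ) : Fin (n + 1)) (6 : ℕ)
    rwa [inv_inv, hinv4, hinv6, eq_comm] at this
  have hconj₂ : α⁻¹ * α⁻¹ * β * (α * α) = swap (n : Fin (n + 1)) (4 : ℕ) := by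
    have := swap_apply_apply (α⁻¹ * α⁻¹) ((4 : ℕ) : Fin (n + 1)) (6 : ℕ)
    rwa [mul_inv_rev, inv_inv, mul_apply, mul_apply, hinv4, hinv6, hinv3, hinv5, eq_comm]
      at this
  have hcomm : swap ((3 : ℕ) : Fin (n + 1)) (5 : ℕ) * swap (n : Fin (n + 1)) (4 : ℕ) *
      swap ((3 : ℕ) : Fin (n + 1)) (5 : ℕ) = swap (n : Fin (n + 1)) (4 : ℕ) := by
    have := swap_apply_apply (swap ((3 : ℕ) : Fin (n + 1)) (5 : ℕ)) n (4 : ℕ)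
    rwa [swap_inv, swap_apply_of_ne_of_ne (natCast_ne_natCast (by omega))
      (natCast_ne_natCast (by omega)), swap_apply_of_ne_of_ne (natCast_ne_natCast (by omega))
      (natCast_ne_natCast (by omega)), eq_comm] at this
  calc _ = (α⁻¹ * β * α) * (α⁻¹ * α⁻¹ * β * (α * α)) * (α⁻¹ * β * α) * β := by
        rw [show β⁻¹ = β from swap_inv _ _]; group
    _ = _ := by rw [hconj₁, hconj₂, hcomm, swap_comm]

theorem conj_tau_eq_swap_mul_swap (hn : 7 ≤ n)
    (hα₁ : ∀ i : ℕ, 3 ≤ i → i < n → α (i : Fin (n + 1)) = ((i + 1 : ℕ) : Fin (n + 1)))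
    (hα₂ : α (n : Fin (n + 1)) = (3 : ℕ)) :
    (swap ((4 : ℕ) : Fin (n + 1)) (6 : ℕ))⁻¹ * α *
        (swap ((4 : ℕ) : Fin (n + 1)) n * swap ((4 : ℕ) : Fin (n + 1)) (6 : ℕ)) *
        ((swap ((4 : ℕ) : Fin (n + 1)) (6 : ℕ))⁻¹ * α)⁻¹ =
      swap ((5 : ℕ) : Fin (n + 1)) (3 : ℕ) * swap ((5 : ℕ) : Fin (n + 1)) (7 : ℕ) := by
  rw [conj_swap_mul_swap, swap_inv, mul_apply, mul_apply, mul_apply, hα₁ 4 (by omega) (by omega),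
    hα₁ 6 (by omega) (by omega), hα₂,
    swap_four_six_apply (by omega) (by omega) (by omega) (by omega),
    swap_four_six_apply (by omega) (by omega) (by omega) (by omega),
    swap_four_six_apply (by omega) (by omega) (by omega) (by omega)]

theorem swap_mul_swap_mem_of_generators (hn : 7 ≤ n) (hodd : Odd n)
    (hα₁ : ∀ i : ℕ, 3 ≤ i → i < n → α (i : Fin (n + 1)) = ((i + 1 : ℕ) : Fin (n + 1)))
    (hα₂ : α (n : Fin (n + 1)) = (3 : ℕ)) {H : Subgroup (Perm (Fin (n + 1)))}
    (hC : (α⁻¹ * swap ((4 : ℕ) : Fin (n + 1)) (6 : ℕ)) ^ 2 ∈ H)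
    (hτ : swap ((4 : ℕ) : Fin (n + 1)) n * swap ((4 : ℕ) : Fin (n + 1)) (6 : ℕ) ∈ H)
    (h573 : swap ((5 : ℕ) : Fin (n + 1)) (3 : ℕ) * swap ((5 : ℕ) : Fin (n + 1)) (7 : ℕ) ∈ H)
    {x y : Fin (n + 1)} (hx : 3 ≤ x.val) (hy : 3 ≤ y.val) (hx4 : x ≠ (4 : ℕ))
    (hy4 : y ≠ (4 : ℕ)) :
    swap ((4 : ℕ) : Fin (n + 1)) x * swap ((4 : ℕ) : Fin (n + 1)) y ∈ H := by
  have hval (i : ℕ) (hi : i ≤ n) : ((i : Fin (n + 1)) : ℕ) = i := Fin.val_cast_of_lt (by omega)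
  have hM (z : Fin (n + 1)) (hz : z.val = 3 ∨ 6 ≤ z.val) :
      swap ((4 : ℕ) : Fin (n + 1)) (6 : ℕ) * swap ((4 : ℕ) : Fin (n + 1)) z ∈ H :=
    swap_mul_swap_mem_of_sameCycle hC (sq_inv_mul_swap_apply_four hn hα₁)
      (by rw [sq_inv_mul_swap_apply_six hn hα₁ hα₂]; exact swap_mul_swap_mem_symm hτ)
      (sameCycle_sq_inv_mul_swap hn hodd hα₁ hα₂ hz)
  have h35 : swap ((4 : ℕ) : Fin (n + 1)) (3 : ℕ) * swap ((4 : ℕ) : Fin (n + 1)) (5 : ℕ) ∈ H := by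
    have hg := swap_mul_swap_mem_trans
      (swap_mul_swap_mem_symm (hM (3 : ℕ) (.inl (hval 3 (by omega)))))
      (hM (7 : ℕ) (.inr (by rw [hval 7 hn]; omega)))
    -- `(4 3)(4 7)` conjugates `(5 7 3)` into `(5 3 4) = (4 3)(4 5)`.
    have hconj := H.mul_mem (H.mul_mem hg h573) (H.inv_mem hg)
    have h54 := natCast_ne_natCast (n := n) (i := 5) (j := 4) (by omega)
    have h57 := natCast_ne_natCast (n := n) (i := 5) (j := 7) (by omega)
    have h53 := natCast_ne_natCast (n := n) (i := 5) (j := 3) (by omega)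
    have h34 := natCast_ne_natCast (n := n) (i := 3) (j := 4) (by omega)
    have h37 := natCast_ne_natCast (n := n) (i := 3) (j := 7) (by omega)
    rwa [conj_swap_mul_swap, mul_apply, mul_apply, mul_apply, swap_apply_of_ne_of_ne h54 h57,
      swap_apply_of_ne_of_ne h54 h53, swap_apply_of_ne_of_ne h34 h37, swap_apply_right,
      swap_apply_right, swap_apply_left, swap_comm ((5 : ℕ) : Fin (n + 1)),
      swap_mul_swap_eq_swap_mul_swap h34 h53.symm] at hconj
  have hR (z : Fin (n + 1)) (hz : 3 ≤ z.val) (hz4 : z ≠ (4 : ℕ)) :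
      swap ((4 : ℕ) : Fin (n + 1)) (6 : ℕ) * swap ((4 : ℕ) : Fin (n + 1)) z ∈ H := by
    by_cases hz5 : z = (5 : ℕ)
    · exact hz5 ▸ swap_mul_swap_mem_trans (hM (3 : ℕ) (.inl (hval 3 (by omega)))) h35
    · refine hM z ?_
      have h4 : z.val ≠ 4 := fun h => hz4 (by rw [← Fin.cast_val_eq_self z, h])
      have h5 : z.val ≠ 5 := fun h => hz5 (by rw [← Fin.cast_val_eq_self z, h])
      omega
  exact swap_mul_swap_mem_trans (swap_mul_swap_mem_symm (hR x hx hx4)) (hR y hy hy4)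

end Generators

/-- Points `1, …, n` live in `Fin (n + 1)`, with `0` unused, and words compose from left to right,
so `x₁⋯x_k` is the Lean product `x_k * ⋯ * x₁`. -/
theorem stmt3 (n : ℕ) (hn : 7 ≤ n) (hodd : Odd n)
    (α β : Equiv.Perm (Fin (n + 1)))
    (hα₁ : ∀ i : ℕ, 3 ≤ i → i < n → α (i : Fin (n + 1)) = ((i + 1 : ℕ) : Fin (n + 1)))
    (hα₂ : α (n : Fin (n + 1)) = 3)
    (hα₃ : ∀ x : Fin (n + 1), x.val < 3 → α x = x)
    (hβ₁ : β 4 = 6) (hβ₂ : β 6 = 4)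
    (hβ₃ : ∀ x : Fin (n + 1), x ∉ ({4, 6} : Set (Fin (n + 1))) → β x = x)
    (σ : Equiv.Perm (Fin (n + 1))) :
    σ ∈ Subgroup.closure
      ({(α⁻¹ * β) ^ 2,
        α⁻¹ * β * α⁻¹ * β⁻¹ * α * β⁻¹ * α * β,
        (β⁻¹ * α) * (α⁻¹ * β * α⁻¹ * β⁻¹ * α * β⁻¹ * α * β) * (β⁻¹ * α)⁻¹} :
        Set (Equiv.Perm (Fin (n + 1)))) ↔
    (Equiv.Perm.sign σ = 1 ∧ ∀ x : Fin (n + 1), x.val < 3 → σ x = x) := by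
  obtain rfl : β = swap ((4 : ℕ) : Fin (n + 1)) (6 : ℕ) :=
    eq_swap_of_apply hβ₁ hβ₂ fun x h4 h6 => hβ₃ x (by rintro (h | h); exacts [h4 h, h6 h])
  rw [tau_eq_swap_mul_swap hn hα₁ hα₂, conj_tau_eq_swap_mul_swap hn hα₁ hα₂]
  set s : Finset (Fin (n + 1)) := Finset.univ.filter fun x => 3 ≤ x.val
  have hs (i : ℕ) (h3 : 3 ≤ i) (hi : i ≤ n) : ((i : ℕ) : Fin (n + 1)) ∈ s := by
    simp [s, Fin.val_cast_of_lt (show i < n + 1 by omega), h3]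
  refine (SetLike.ext_iff.1
    (le_antisymm (b := (alternatingGroup s).map ofSubtype) ?_ ?_) σ).trans ?_
  · rw [closure_le]
    rintro g (rfl | rfl | rfl)
    · exact sq_inv_mul_swap_mem_map_ofSubtype_alternatingGroup (by omega) hα₃
    · exact swap_mul_swap_mem_map_ofSubtype_alternatingGroup (hs 4 (by omega) (by omega))
        (hs n (by omega) le_rfl) (hs 4 (by omega) (by omega)) (hs 6 (by omega) (by omega))
        (natCast_ne_natCast (by omega)) (natCast_ne_natCast (by omega))
    · exact swap_mul_swap_mem_map_ofSubtype_alternatingGroup (hs 5 (by omega) (by omega))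
        (hs 3 le_rfl (by omega)) (hs 5 (by omega) (by omega)) (hs 7 (by omega) hn)
        (natCast_ne_natCast (by omega)) (natCast_ne_natCast (by omega))
  · refine map_ofSubtype_alternatingGroup_le (hs 4 (by omega) (by omega))
      fun x hx y hy hx4 hy4 => swap_mul_swap_mem_of_generators hn hodd hα₁ hα₂
        (subset_closure (by simp)) (subset_closure (by simp)) (subset_closure (by simp))
        (by simpa [s] using hx) (by simpa [s] using hy) hx4 hy4
  · rw [mem_map_ofSubtype_alternatingGroup_iff]
    simp [s]
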